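/- Let G be a complex Banach–Lie group such that holomorphic functions separate the points of G. Let g₊, h₊ : ℂ → G be holomorphic and let g₋, h₋ : ℂ× → G be holomorphic with g₋(z) → e and h₋(z) → e as |z| → ∞ (e the neutral element). If g₊(z)·g₋(z) = h₊(z)·h₋(z) for all z ∈ ℂ×, then g₊ = h₊ and g₋ = h₋. -/

import Mathlib

/-! The map `h₊⁻¹ g₊` is entire and coincides on `ℂ×` with `h₋ g₋⁻¹`, which tends to `e` at
infinity. Composing with any holomorphic `φ : G → ℂ` gives a bounded entire function, constant by
Liouville; since such `φ` separate points, `h₊⁻¹ g₊ ≡ e`. -/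

open Manifold Metric Filter

theorem MDifferentiable.apply_eq_of_tendsto_cocompact
    {E F : Type*} [NormedAddCommGroup E] [NormedSpace ℂ E]
    [NormedAddCommGroup F] [NormedSpace ℂ F] [Nontrivial F]
    {M : Type*} [TopologicalSpace M] [ChartedSpace E M]
    (hsep : ∀ x y : M, x ≠ y → ∃ φ : M → ℂ, MDifferentiable 𝓘(ℂ, E) 𝓘(ℂ, ℂ) φ ∧ φ x ≠ φ y)
    {f : F → M} (hf : MDifferentiable 𝓘(ℂ, F) 𝓘(ℂ, E) f) {c : M}
    (hlim : Tendsto f (cocompact F) (nhds c)) (z : F) : f z = c := by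
  by_contra hne
  obtain ⟨φ, hφ, hφne⟩ := hsep (f z) c hne
  have hφf : Differentiable ℂ (φ ∘ f) := mdifferentiable_iff_differentiable.mp (hφ.comp hf)
  exact hφne (hφf.apply_eq_of_tendsto_cocompact z ((hφ.continuous.tendsto c).comp hlim))

theorem MDifferentiable.inv_mul_of_lieGroup
    {𝕜 : Type*} [NontriviallyNormedField 𝕜]
    {H : Type*} [TopologicalSpace H] {E : Type*} [NormedAddCommGroup E] [NormedSpace 𝕜 E]
    {I : ModelWithCorners 𝕜 E H}
    {H' : Type*} [TopologicalSpace H'] {E' : Type*} [NormedAddCommGroup E'] [NormedSpace 𝕜 E']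
    {J : ModelWithCorners 𝕜 E' H'}
    {G : Type*} [TopologicalSpace G] [ChartedSpace H G] [Group G] {n : WithTop ℕ∞}
    [LieGroup I n G] (hn : n ≠ 0)
    {M : Type*} [TopologicalSpace M] [ChartedSpace H' M]
    {f g : M → G} (hf : MDifferentiable J I f) (hg : MDifferentiable J I g) :
    MDifferentiable J I (fun x => (f x)⁻¹ * g x) :=
  ((contMDiff_mul I n).mdifferentiable hn).comp
    ((((contMDiff_inv I n).mdifferentiable hn).comp hf).prodMk hg)

theorem stmt_13
    {E : Type*} [NormedAddCommGroup E] [NormedSpace ℂ E]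
    {G : Type*} [TopologicalSpace G] [ChartedSpace E G] [Group G]
    [LieGroup 𝓘(ℂ, E) (⊤ : ℕ∞) G]
    (hsep : ∀ x y : G, x ≠ y → ∃ φ : G → ℂ,
      MDifferentiable 𝓘(ℂ, E) 𝓘(ℂ, ℂ) φ ∧ φ x ≠ φ y)
    (gp hp gm hm : ℂ → G)
    (hgp : MDifferentiable 𝓘(ℂ, ℂ) 𝓘(ℂ, E) gp)
    (hhp : MDifferentiable 𝓘(ℂ, ℂ) 𝓘(ℂ, E) hp)
    (hgml : Tendsto gm (comap (fun z : ℂ => ‖z‖) atTop) (nhds (1 : G)))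
    (hhml : Tendsto hm (comap (fun z : ℂ => ‖z‖) atTop) (nhds (1 : G)))
    (heq : ∀ z : ℂ, z ≠ 0 → gp z * gm z = hp z * hm z) :
    gp = hp ∧ Set.EqOn gm hm {z : ℂ | z ≠ 0} := by
  have : IsTopologicalGroup G := topologicalGroup_of_lieGroup 𝓘(ℂ, E) (⊤ : ℕ∞) (G := G)
  rw [comap_norm_atTop, cobounded_eq_cocompact] at hgml hhml
  have hswap : ∀ z : ℂ, z ≠ 0 → (hp z)⁻¹ * gp z = hm z * (gm z)⁻¹ := fun z hz => by
    rw [inv_mul_eq_iff_eq_mul, ← mul_assoc, ← heq z hz, mul_inv_cancel_right]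
  have hlim : Tendsto (fun z => (hp z)⁻¹ * gp z) (cocompact ℂ) (nhds 1) := by
    simpa using (hhml.mul hgml.inv).congr'
      (mem_of_superset isCompact_singleton.compl_mem_cocompact fun z hz => (hswap z hz).symm)
  have hentire : MDifferentiable 𝓘(ℂ, ℂ) 𝓘(ℂ, E) fun z => (hp z)⁻¹ * gp z :=
    hhp.inv_mul_of_lieGroup (n := (⊤ : ℕ∞)) (by simp) hgp
  have hgphp : gp = hp := funext fun z =>
    (inv_mul_eq_one.mp (hentire.apply_eq_of_tendsto_cocompact hsep hlim z)).symm
  refine ⟨hgphp, fun z hz => mul_left_cancel (a := hp z) ?_⟩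
  simpa [hgphp] using heq z hz
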